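/- Let r be a positive integer, w = (w₁, w₁', w₂, w₂') ∈ ℤ≥0⁴, and let v₁', v₂' be nonnegative integers with v₁' ≤ w₁' and v₂' ≤ w₂. Consider tuples (P, Q, Z₁', Z₂', C₁, …, C_r) of complex matrices of sizes (w₁'−v₁')×v₁', v₂'×(w₂−v₂'), v₁'×w₁, w₂'×v₂', and v₁'×v₂' (for each C_h), respectively, subject to the two conditions: the v₁'×(w₁ + r·v₂') matrix [Z₁' C₁ ⋯ C_r] has rank v₁', and the (w₂' + r·v₁')×v₂' matrix obtained by stacking Z₂', C₁, …, C_r vertically has rank v₂'. Then the assignment sending such a tuple to (x₁, x₂, y₁, …, y_r), where x₁ is the w₁'×w₁ matrix with top block Z₁' and bottom block P·Z₁', x₂ is the w₂'×w₂ matrix with left block Z₂' and right block Z₂'·Q, and each y_h is the w₁'×w₂ matrix with blocks [[C_h, C_h·Q],[P·C_h, P·C_h·Q]], is a bijection onto the set of tuples (x₁, x₂, y₁, …, y_r) ∈ E_w such that rank A = v₁', rank B = v₂', the first v₁' rows of A are linearly independent, and the first v₂' columns of B are linearly independent. -/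

import Mathlib

open Matrix

noncomputable section

/-- The space `E_w` of tuples `(x₁, x₂, y₁, …, y_r)` of complex matrices, where `x₁` has size
`w₁'×w₁`, `x₂` has size `w₂'×w₂`, and each `y_h` has size `w₁'×w₂`. -/
abbrev EW (r w₁ w₁' w₂ w₂' : ℕ) : Type :=
  Matrix (Fin w₁') (Fin w₁) ℂ × Matrix (Fin w₂') (Fin w₂) ℂ ×
    (Fin r → Matrix (Fin w₁') (Fin w₂) ℂ)

/-- The horizontally concatenated block matrix `A = [x₁ y₁ ⋯ y_r]`. -/
def matA {r m a b : ℕ} (x₁ : Matrix (Fin m) (Fin a) ℂ)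
    (y : Fin r → Matrix (Fin m) (Fin b) ℂ) :
    Matrix (Fin m) (Fin a ⊕ Fin r × Fin b) ℂ :=
  Matrix.of fun i => Sum.elim (fun j => x₁ i j) (fun p => y p.1 i p.2)

/-- The vertically stacked block matrix `B = [x₂; y₁; ⋯; y_r]`. -/
def matB {r n a b : ℕ} (x₂ : Matrix (Fin a) (Fin n) ℂ)
    (y : Fin r → Matrix (Fin b) (Fin n) ℂ) :
    Matrix (Fin a ⊕ Fin r × Fin b) (Fin n) ℂ :=
  Matrix.of fun i j => Sum.elim (fun i₂ => x₂ i₂ j) (fun p => y p.1 p.2 j) i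

/-- The subspace `ℂ^{w₂'} × X₁^{×r}` of `ℂ^{w₂'} × (ℂ^{w₁'})^r`: all tuples `(a, u₁, …, u_r)`
whose last `r` components `u_h` all lie in `X₁`. -/
def prodSub (r w₂' w₁' : ℕ) (X₁ : Submodule ℂ (Fin w₁' → ℂ)) :
    Submodule ℂ (Fin w₂' ⊕ Fin r × Fin w₁' → ℂ) :=
  ⨅ h : Fin r, X₁.comap (LinearMap.funLeft ℂ ℂ fun i => Sum.inr (h, i))

/-- Vertical stacking of two matrices with `Fin` row index types. -/
def vstack {a b n : ℕ} (M : Matrix (Fin a) (Fin n) ℂ) (N : Matrix (Fin b) (Fin n) ℂ) :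
    Matrix (Fin (a + b)) (Fin n) ℂ :=
  Matrix.of fun i j => Fin.addCases (fun i₁ => M i₁ j) (fun i₂ => N i₂ j) i

/-- Horizontal concatenation of two matrices with `Fin` column index types. -/
def hstack {m a b : ℕ} (M : Matrix (Fin m) (Fin a) ℂ) (N : Matrix (Fin m) (Fin b) ℂ) :
    Matrix (Fin m) (Fin (a + b)) ℂ :=
  Matrix.of fun i j => Fin.addCases (fun j₁ => M i j₁) (fun j₂ => N i j₂) j


/-!
In the chart, `x₁ = [1; P] Z₁'`, `x₂ = Z₂' [1 Q]` and `y_h = [1; P] C_h [1 Q]`. Since `[1; P]`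
has a left inverse and `[1 Q]` a right inverse, `A = [1; P] [Z₁' C₁[1 Q] ⋯ C_r[1 Q]]` has the
rank of `[Z₁' C₁ ⋯ C_r]`, and its first `v₁'` rows `[Z₁' C₁[1 Q] ⋯ C_r[1 Q]]` are independent
exactly when that rank is `v₁'`. The transpose of `B` is the matrix `A` of the transposed data
`(Qᵀ, Pᵀ, Z₂'ᵀ, Z₁'ᵀ, C_hᵀ)`, so the same holds for `B`. Conversely, if `rank A = v₁'` and the
first `v₁'` rows of `A` are independent, the other rows are `P` times them for a unique `P`, and
dually the last columns of `B` are the first ones times a unique `Q`; `Z₁'`, `Z₂'`, `C_h` are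
then read off the top-left blocks.
-/

open scoped Kronecker

section RowRank

open Submodule

variable {K : Type*} [Field K] {m n ι : Type*}

theorem Matrix.rank_eq_card_iff_linearIndependent_row [Fintype m] [Fintype n]
    (M : Matrix m n K) :
    M.rank = Fintype.card m ↔ LinearIndependent K M.row := by
  rw [M.rank_eq_finrank_span_row, linearIndependent_iff_card_eq_finrank_span, Set.finrank,
    eq_comm]

theorem Matrix.eq_of_mul_eq_mul_of_linearIndependent_row [Fintype m] {N : Matrix m n K}
    (hN : LinearIndependent K N.row) {P P' : Matrix ι m K} (h : P * N = P' * N) : P = P' :=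
  funext fun i => Matrix.vecMul_injective_iff.mpr hN <| by
    simpa only [mul_apply_eq_vecMul] using congrFun h i

theorem Matrix.rank_mul_eq_right_of_mul_eq_one [Fintype m] [Fintype n] {p : Type*} [Fintype p]
    [DecidableEq p] {X : Matrix m p K} {Y : Matrix p m K} (hYX : Y * X = 1) (N : Matrix p n K) :
    (X * N).rank = N.rank :=
  le_antisymm (rank_mul_le_right X N) <| by
    simpa only [← Matrix.mul_assoc, hYX, Matrix.one_mul] using rank_mul_le_right Y (X * N)

theorem Matrix.exists_eq_mul_submatrix_of_rank_eq [Fintype m] [Fintype n] [Fintype ι]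
    {M : Matrix m n K} {f : ι → m} (hf : LinearIndependent K fun i => M (f i))
    (hM : M.rank = Fintype.card ι) :
    ∃ P : Matrix m ι K, M = P * M.submatrix f id := by
  have hspan : span K (Set.range fun i => M (f i)) = span K (Set.range M.row) := by
    refine eq_of_le_of_finrank_le (span_mono (Set.range_comp_subset_range f M)) ?_
    rw [← M.rank_eq_finrank_span_row, hM, finrank_span_eq_card hf]
  have (j : m) : ∃ c : ι → K, ∑ i, c i • M (f i) = M j :=
    (mem_span_range_iff_exists_fun K).mp (hspan ▸ subset_span ⟨j, rfl⟩)
  choose P hP using this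
  refine ⟨Matrix.of P, funext fun j => ?_⟩
  rw [mul_apply_eq_vecMul, vecMul_eq_sum, ← hP j]
  rfl

end RowRank

section BlockMatrices

variable {a b k n : ℕ}

@[simp] lemma vstack_castAdd (M : Matrix (Fin a) (Fin n) ℂ) (N : Matrix (Fin b) (Fin n) ℂ)
    (i : Fin a) (j : Fin n) : vstack M N (Fin.castAdd b i) j = M i j := by
  simp [vstack]

@[simp] lemma vstack_natAdd (M : Matrix (Fin a) (Fin n) ℂ) (N : Matrix (Fin b) (Fin n) ℂ)
    (i : Fin b) (j : Fin n) : vstack M N (Fin.natAdd a i) j = N i j := by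
  simp [vstack]

@[simp] lemma hstack_castAdd (M : Matrix (Fin k) (Fin a) ℂ) (N : Matrix (Fin k) (Fin b) ℂ)
    (i : Fin k) (j : Fin a) : hstack M N i (Fin.castAdd b j) = M i j := by
  simp [hstack]

@[simp] lemma hstack_natAdd (M : Matrix (Fin k) (Fin a) ℂ) (N : Matrix (Fin k) (Fin b) ℂ)
    (i : Fin k) (j : Fin b) : hstack M N i (Fin.natAdd a j) = N i j := by
  simp [hstack]

lemma transpose_hstack (M : Matrix (Fin k) (Fin a) ℂ) (N : Matrix (Fin k) (Fin b) ℂ) :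
    (hstack M N)ᵀ = vstack Mᵀ Nᵀ := by
  ext i j
  refine Fin.addCases (fun i => ?_) (fun i => ?_) i <;> simp

lemma transpose_vstack (M : Matrix (Fin a) (Fin n) ℂ) (N : Matrix (Fin b) (Fin n) ℂ) :
    (vstack M N)ᵀ = hstack Mᵀ Nᵀ := by
  rw [← transpose_transpose (hstack _ _), transpose_hstack, transpose_transpose,
    transpose_transpose]

lemma vstack_mul (M : Matrix (Fin a) (Fin k) ℂ) (N : Matrix (Fin b) (Fin k) ℂ)
    (X : Matrix (Fin k) (Fin n) ℂ) : vstack M N * X = vstack (M * X) (N * X) := by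
  ext i j
  refine Fin.addCases (fun i => ?_) (fun i => ?_) i <;> simp [mul_apply]

lemma mul_hstack (X : Matrix (Fin n) (Fin k) ℂ) (M : Matrix (Fin k) (Fin a) ℂ)
    (N : Matrix (Fin k) (Fin b) ℂ) : X * hstack M N = hstack (X * M) (X * N) := by
  ext i j
  refine Fin.addCases (fun j => ?_) (fun j => ?_) j <;> simp [mul_apply]

lemma hstack_mul_vstack (A : Matrix (Fin k) (Fin a) ℂ) (B : Matrix (Fin k) (Fin b) ℂ)
    (C : Matrix (Fin a) (Fin n) ℂ) (D : Matrix (Fin b) (Fin n) ℂ) :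
    hstack A B * vstack C D = A * C + B * D := by
  ext i j
  simp [mul_apply, Fin.sum_univ_add]

lemma vstack_mul_submatrix_castAdd {l : Type*} (M : Matrix (Fin a) (Fin k) ℂ)
    (N : Matrix (Fin b) (Fin k) ℂ) (X : Matrix (Fin k) l ℂ) :
    (vstack M N * X).submatrix (Fin.castAdd b) id = M * X := by
  ext i j
  simp [mul_apply]

lemma vstack_submatrix_natAdd (M : Matrix (Fin a) (Fin n) ℂ) (N : Matrix (Fin b) (Fin n) ℂ) :
    (vstack M N).submatrix (Fin.natAdd a) id = N := by
  ext i j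
  simp

lemma vstack_one_mul (P : Matrix (Fin b) (Fin a) ℂ) (M : Matrix (Fin a) (Fin n) ℂ) :
    vstack 1 P * M = vstack M (P * M) := by
  rw [vstack_mul, Matrix.one_mul]

lemma mul_hstack_one (M : Matrix (Fin n) (Fin a) ℂ) (Q : Matrix (Fin a) (Fin b) ℂ) :
    M * hstack 1 Q = hstack M (M * Q) := by
  rw [mul_hstack, Matrix.mul_one]

lemma vstack_one_mul_mul_hstack_one (P : Matrix (Fin b) (Fin a) ℂ)
    (M : Matrix (Fin a) (Fin k) ℂ) (Q : Matrix (Fin k) (Fin n) ℂ) :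
    vstack 1 P * M * hstack 1 Q = vstack (hstack M (M * Q)) (hstack (P * M) (P * M * Q)) := by
  rw [Matrix.mul_assoc, mul_hstack_one, vstack_one_mul, mul_hstack, Matrix.mul_assoc]

lemma hstack_one_zero_mul_vstack_one (P : Matrix (Fin b) (Fin a) ℂ) :
    hstack (1 : Matrix (Fin a) (Fin a) ℂ) (0 : Matrix (Fin a) (Fin b) ℂ) *
      vstack (1 : Matrix (Fin a) (Fin a) ℂ) P = 1 := by
  rw [hstack_mul_vstack, Matrix.one_mul, Matrix.zero_mul, add_zero]

lemma hstack_one_mul_vstack_one_zero (Q : Matrix (Fin a) (Fin b) ℂ) :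
    hstack (1 : Matrix (Fin a) (Fin a) ℂ) Q *
      vstack (1 : Matrix (Fin a) (Fin a) ℂ) (0 : Matrix (Fin b) (Fin a) ℂ) = 1 := by
  rw [hstack_mul_vstack, Matrix.one_mul, Matrix.mul_zero, add_zero]

lemma eq_vstack_one_mul_of_submatrix_castAdd_eq_one {X : Matrix (Fin (a + b)) (Fin a) ℂ}
    (hX : X.submatrix (Fin.castAdd b) id = 1) :
    X = vstack 1 (X.submatrix (Fin.natAdd a) id) := by
  ext i j
  refine Fin.addCases (fun i => ?_) (fun i => ?_) i
  · simpa using congrFun (congrFun hX i) j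
  · simp

lemma exists_eq_vstack_one_mul {l : Type*} [Fintype l] {M : Matrix (Fin (a + b)) l ℂ}
    (hM : M.rank = a) (hind : LinearIndependent ℂ fun i => M (Fin.castAdd b i)) :
    ∃ P : Matrix (Fin b) (Fin a) ℂ, M = vstack 1 P * M.submatrix (Fin.castAdd b) id := by
  obtain ⟨X, hX⟩ := M.exists_eq_mul_submatrix_of_rank_eq hind (by rw [hM, Fintype.card_fin])
  have htop : X.submatrix (Fin.castAdd b) id = 1 :=
    eq_of_mul_eq_mul_of_linearIndependent_row (N := M.submatrix (Fin.castAdd b) id) hind <| by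
      rw [Matrix.one_mul]
      exact (congrArg (·.submatrix (Fin.castAdd b) id) hX).symm
  exact ⟨_, (eq_vstack_one_mul_of_submatrix_castAdd_eq_one htop) ▸ hX⟩

end BlockMatrices

section BlockRows

variable {r m a b c : ℕ}

lemma mul_matA {k : ℕ} (X : Matrix (Fin k) (Fin m) ℂ) (x : Matrix (Fin m) (Fin a) ℂ)
    (y : Fin r → Matrix (Fin m) (Fin b) ℂ) :
    X * matA x y = matA (X * x) fun h => X * y h := by
  ext i (j | ⟨h, j⟩) <;> simp [matA, mul_apply]

lemma matA_submatrix {k : ℕ} (f : Fin k → Fin m) (x : Matrix (Fin m) (Fin a) ℂ)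
    (y : Fin r → Matrix (Fin m) (Fin b) ℂ) :
    (matA x y).submatrix f id = matA (x.submatrix f id) fun h => (y h).submatrix f id := by
  ext i (j | ⟨h, j⟩) <;> rfl

lemma transpose_matB (x : Matrix (Fin a) (Fin m) ℂ) (y : Fin r → Matrix (Fin b) (Fin m) ℂ) :
    (matB x y)ᵀ = matA xᵀ fun h => (y h)ᵀ := by
  ext i (j | ⟨h, j⟩) <;> rfl

lemma matA_inj {x x' : Matrix (Fin m) (Fin a) ℂ} {y y' : Fin r → Matrix (Fin m) (Fin b) ℂ} :
    matA x y = matA x' y' ↔ x = x' ∧ y = y' := by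
  refine ⟨fun hxy => ⟨?_, ?_⟩, fun ⟨hx, hy⟩ => hx ▸ hy ▸ rfl⟩
  · ext i j
    exact congrFun (congrFun hxy i) (Sum.inl j)
  · ext h i j
    exact congrFun (congrFun hxy i) (Sum.inr (h, j))

lemma matA_mul_fromBlocks (x : Matrix (Fin m) (Fin a) ℂ) (y : Fin r → Matrix (Fin m) (Fin b) ℂ)
    (R : Matrix (Fin b) (Fin c) ℂ) :
    matA x y * (fromBlocks 1 0 0 ((1 : Matrix (Fin r) (Fin r) ℂ) ⊗ₖ R) :
        Matrix (Fin a ⊕ Fin r × Fin b) (Fin a ⊕ Fin r × Fin c) ℂ) =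
      matA x fun h => y h * R := by
  ext i (j | ⟨h, j⟩) <;>
    simp [mul_apply, Fintype.sum_sum_type, Fintype.sum_prod_type, one_apply, matA]

lemma rank_matA_mul_of_mul_eq_one {R : Matrix (Fin b) (Fin c) ℂ} {S : Matrix (Fin c) (Fin b) ℂ}
    (hRS : R * S = 1) (x : Matrix (Fin m) (Fin a) ℂ) (y : Fin r → Matrix (Fin m) (Fin b) ℂ) :
    (matA x fun h => y h * R).rank = (matA x y).rank := by
  refine le_antisymm ?_ ?_
  · rw [← matA_mul_fromBlocks]
    exact rank_mul_le_left _ _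
  · calc (matA x y).rank = (matA x fun h => y h * R * S).rank := by
          simp only [Matrix.mul_assoc, hRS, Matrix.mul_one]
      _ ≤ (matA x fun h => y h * R).rank := by
          rw [← matA_mul_fromBlocks]
          exact rank_mul_le_left _ _

lemma exists_matA_eq_vstack_one_mul {v d : ℕ} {x : Matrix (Fin (v + d)) (Fin a) ℂ}
    {y : Fin r → Matrix (Fin (v + d)) (Fin b) ℂ} (hA : (matA x y).rank = v)
    (hind : LinearIndependent ℂ fun i => matA x y (Fin.castAdd d i)) :
    ∃ P : Matrix (Fin d) (Fin v) ℂ, x = vstack 1 P * x.submatrix (Fin.castAdd d) id ∧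
      ∀ h, y h = vstack 1 P * (y h).submatrix (Fin.castAdd d) id := by
  obtain ⟨P, hP⟩ := exists_eq_vstack_one_mul hA hind
  rw [matA_submatrix, mul_matA, matA_inj] at hP
  exact ⟨P, hP.1, fun h => congrFun hP.2 h⟩

end BlockRows

section Chart

variable {r w₁ w₂' v₁ d₁ v₂ d₂ : ℕ}

def chart :
    Matrix (Fin d₁) (Fin v₁) ℂ × Matrix (Fin v₂) (Fin d₂) ℂ × Matrix (Fin v₁) (Fin w₁) ℂ ×
      Matrix (Fin w₂') (Fin v₂) ℂ × (Fin r → Matrix (Fin v₁) (Fin v₂) ℂ) →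
    EW r w₁ (v₁ + d₁) (v₂ + d₂) w₂'
  | (P, Q, Z₁, Z₂, C) =>
    (vstack Z₁ (P * Z₁), hstack Z₂ (Z₂ * Q),
      fun h => vstack (hstack (C h) (C h * Q)) (hstack (P * C h) (P * C h * Q)))

variable (P : Matrix (Fin d₁) (Fin v₁) ℂ) (Q : Matrix (Fin v₂) (Fin d₂) ℂ)
    (Z₁ : Matrix (Fin v₁) (Fin w₁) ℂ) (Z₂ : Matrix (Fin w₂') (Fin v₂) ℂ)
    (C : Fin r → Matrix (Fin v₁) (Fin v₂) ℂ)

lemma chart_eq_mul :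
    chart (P, Q, Z₁, Z₂, C) = (vstack 1 P * Z₁, Z₂ * hstack 1 Q,
      fun h => vstack 1 P * C h * hstack 1 Q) := by
  simp only [vstack_one_mul_mul_hstack_one]
  simp only [chart, vstack_one_mul, mul_hstack_one]

lemma matA_chart :
    matA (chart (P, Q, Z₁, Z₂, C)).1 (chart (P, Q, Z₁, Z₂, C)).2.2 =
      vstack 1 P * matA Z₁ fun h => C h * hstack 1 Q := by
  simp only [chart_eq_mul, mul_matA, Matrix.mul_assoc]

lemma transpose_matB_chart :
    (matB (chart (P, Q, Z₁, Z₂, C)).2.1 (chart (P, Q, Z₁, Z₂, C)).2.2)ᵀ =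
      matA (chart (Qᵀ, Pᵀ, Z₂ᵀ, Z₁ᵀ, fun h => (C h)ᵀ)).1
        (chart (Qᵀ, Pᵀ, Z₂ᵀ, Z₁ᵀ, fun h => (C h)ᵀ)).2.2 := by
  simp only [transpose_matB, chart_eq_mul, transpose_mul, transpose_hstack, transpose_vstack,
    transpose_one, Matrix.mul_assoc]

lemma rank_matA_chart :
    (matA (chart (P, Q, Z₁, Z₂, C)).1 (chart (P, Q, Z₁, Z₂, C)).2.2).rank =
      (matA Z₁ C).rank := by
  rw [matA_chart, rank_mul_eq_right_of_mul_eq_one (hstack_one_zero_mul_vstack_one P),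
    rank_matA_mul_of_mul_eq_one (hstack_one_mul_vstack_one_zero Q)]

lemma rank_matB_chart :
    (matB (chart (P, Q, Z₁, Z₂, C)).2.1 (chart (P, Q, Z₁, Z₂, C)).2.2).rank =
      (matB Z₂ C).rank := by
  rw [← rank_transpose, transpose_matB_chart, rank_matA_chart, ← transpose_matB, rank_transpose]

lemma linearIndependent_matA_chart_iff :
    (LinearIndependent ℂ fun i =>
      matA (chart (P, Q, Z₁, Z₂, C)).1 (chart (P, Q, Z₁, Z₂, C)).2.2 (Fin.castAdd d₁ i)) ↔
      (matA Z₁ C).rank = v₁ := by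
  rw [matA_chart]
  change LinearIndependent ℂ ((vstack 1 P * matA Z₁ fun h => C h * hstack 1 Q).submatrix
    (Fin.castAdd d₁) id).row ↔ _
  rw [vstack_mul_submatrix_castAdd, Matrix.one_mul, ← rank_eq_card_iff_linearIndependent_row,
    rank_matA_mul_of_mul_eq_one (hstack_one_mul_vstack_one_zero Q), Fintype.card_fin]

lemma linearIndependent_matB_chart_iff :
    (LinearIndependent ℂ fun j i =>
      matB (chart (P, Q, Z₁, Z₂, C)).2.1 (chart (P, Q, Z₁, Z₂, C)).2.2 i (Fin.castAdd d₂ j)) ↔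
      (matB Z₂ C).rank = v₂ := by
  have := linearIndependent_matA_chart_iff Qᵀ Pᵀ Z₂ᵀ Z₁ᵀ fun h => (C h)ᵀ
  rwa [← transpose_matB_chart, ← transpose_matB, rank_transpose] at this

lemma eq_of_matA_chart_eq {P' : Matrix (Fin d₁) (Fin v₁) ℂ} {Q' : Matrix (Fin v₂) (Fin d₂) ℂ}
    {Z₁' : Matrix (Fin v₁) (Fin w₁) ℂ} {Z₂' : Matrix (Fin w₂') (Fin v₂) ℂ}
    {C' : Fin r → Matrix (Fin v₁) (Fin v₂) ℂ} (hA : (matA Z₁ C).rank = v₁)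
    (h : matA (chart (P, Q, Z₁, Z₂, C)).1 (chart (P, Q, Z₁, Z₂, C)).2.2 =
      matA (chart (P', Q', Z₁', Z₂', C')).1 (chart (P', Q', Z₁', Z₂', C')).2.2) :
    P = P' ∧ Z₁ = Z₁' ∧ C = C' := by
  rw [matA_chart, matA_chart] at h
  have hN := congrArg (·.submatrix (Fin.castAdd d₁) id) h
  simp only [vstack_mul_submatrix_castAdd, Matrix.one_mul] at hN
  obtain ⟨rfl, hC⟩ := matA_inj.1 hN
  obtain rfl : C = C' := funext fun h => by
    simpa only [Matrix.mul_assoc, hstack_one_mul_vstack_one_zero, Matrix.mul_one] using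
      congrArg (· * vstack (1 : Matrix (Fin v₂) (Fin v₂) ℂ) (0 : Matrix (Fin d₂) (Fin v₂) ℂ))
        (congrFun hC h)
  rw [← hN] at h
  have hind : LinearIndependent ℂ
      (matA Z₁ fun h => C h * hstack (1 : Matrix (Fin v₂) (Fin v₂) ℂ) Q).row := by
    rw [← rank_eq_card_iff_linearIndependent_row,
      rank_matA_mul_of_mul_eq_one (hstack_one_mul_vstack_one_zero Q), hA, Fintype.card_fin]
  have hP := congrArg (·.submatrix (Fin.natAdd v₁) id)
    (eq_of_mul_eq_mul_of_linearIndependent_row hind h)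
  simp only [vstack_submatrix_natAdd] at hP
  exact ⟨hP, rfl, rfl⟩

end Chart

section Bijection

variable {r w₁ w₂' v₁ d₁ v₂ d₂ : ℕ}

lemma eq_of_chart_eq {P P' : Matrix (Fin d₁) (Fin v₁) ℂ} {Q Q' : Matrix (Fin v₂) (Fin d₂) ℂ}
    {Z₁ Z₁' : Matrix (Fin v₁) (Fin w₁) ℂ} {Z₂ Z₂' : Matrix (Fin w₂') (Fin v₂) ℂ}
    {C C' : Fin r → Matrix (Fin v₁) (Fin v₂) ℂ} (hA : (matA Z₁ C).rank = v₁)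
    (hB : (matB Z₂ C).rank = v₂)
    (h : chart (P, Q, Z₁, Z₂, C) = chart (P', Q', Z₁', Z₂', C')) :
    (P, Q, Z₁, Z₂, C) = (P', Q', Z₁', Z₂', C') := by
  obtain ⟨rfl, rfl, rfl⟩ :=
    eq_of_matA_chart_eq P Q Z₁ Z₂ C hA (congrArg (fun p => matA p.1 p.2.2) h)
  have hBt : (matA Z₂ᵀ fun h => (C h)ᵀ).rank = v₂ := by
    rw [← transpose_matB, rank_transpose, hB]
  have hT := congrArg (fun p => (matB p.2.1 p.2.2)ᵀ) h
  simp only [transpose_matB_chart] at hT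
  obtain ⟨hQ, hZ₂, -⟩ := eq_of_matA_chart_eq _ _ _ _ _ hBt hT
  rw [transpose_inj.1 hQ, transpose_inj.1 hZ₂]

lemma exists_chart_eq {p : EW r w₁ (v₁ + d₁) (v₂ + d₂) w₂'} (hA : (matA p.1 p.2.2).rank = v₁)
    (hB : (matB p.2.1 p.2.2).rank = v₂)
    (hAind : LinearIndependent ℂ fun i => matA p.1 p.2.2 (Fin.castAdd d₁ i))
    (hBind : LinearIndependent ℂ fun j i => matB p.2.1 p.2.2 i (Fin.castAdd d₂ j)) :
    ∃ t, chart t = p := by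
  obtain ⟨x₁, x₂, y⟩ := p
  obtain ⟨P, hx₁, hy₁⟩ := exists_matA_eq_vstack_one_mul hA hAind
  obtain ⟨Q, hx₂, hy₂⟩ := exists_matA_eq_vstack_one_mul (x := x₂ᵀ) (y := fun h => (y h)ᵀ)
    (by rwa [← transpose_matB, rank_transpose]) (by rwa [← transpose_matB])
  replace hx₂ := congrArg transpose hx₂
  replace hy₂ h := congrArg transpose (hy₂ h)
  simp only [transpose_transpose, transpose_mul, transpose_submatrix, transpose_vstack,
    transpose_one] at hx₂ hy₂
  refine ⟨(P, Qᵀ, x₁.submatrix (Fin.castAdd d₁) id, x₂.submatrix id (Fin.castAdd d₂),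
    fun h => (y h).submatrix (Fin.castAdd d₁) (Fin.castAdd d₂)), ?_⟩
  rw [chart_eq_mul, ← hx₁, ← hx₂]
  congr 2
  funext h
  calc vstack 1 P * (y h).submatrix (Fin.castAdd d₁) (Fin.castAdd d₂) * hstack 1 Qᵀ
      = vstack 1 P * ((y h).submatrix id (Fin.castAdd d₂) * hstack 1 Qᵀ).submatrix
          (Fin.castAdd d₁) id := by rw [Matrix.mul_assoc]; rfl
    _ = y h := by rw [← hy₂ h, ← hy₁ h]

theorem bijOn_chart :
    Set.BijOn
      (chart (r := r) (w₁ := w₁) (w₂' := w₂') (d₁ := d₁) (d₂ := d₂))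
      {t | (matA t.2.2.1 t.2.2.2.2).rank = v₁ ∧ (matB t.2.2.2.1 t.2.2.2.2).rank = v₂}
      {p | (matA p.1 p.2.2).rank = v₁ ∧ (matB p.2.1 p.2.2).rank = v₂ ∧
          LinearIndependent ℂ (fun i : Fin v₁ => matA p.1 p.2.2 (Fin.castAdd d₁ i)) ∧
          LinearIndependent ℂ
            (fun j : Fin v₂ => fun i => matB p.2.1 p.2.2 i (Fin.castAdd d₂ j))} := by
  refine ⟨?_, ?_, ?_⟩
  · rintro ⟨P, Q, Z₁, Z₂, C⟩ ⟨hA, hB⟩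
    exact ⟨(rank_matA_chart ..).trans hA, (rank_matB_chart ..).trans hB,
      (linearIndependent_matA_chart_iff ..).2 hA, (linearIndependent_matB_chart_iff ..).2 hB⟩
  · rintro ⟨P, Q, Z₁, Z₂, C⟩ ⟨hA, hB⟩ ⟨P', Q', Z₁', Z₂', C'⟩ - h
    exact eq_of_chart_eq hA hB h
  · rintro p ⟨hA, hB, hAind, hBind⟩
    obtain ⟨⟨P, Q, Z₁, Z₂, C⟩, rfl⟩ := exists_chart_eq hA hB hAind hBind
    exact ⟨(P, Q, Z₁, Z₂, C), ⟨(rank_matA_chart ..).symm.trans hA,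
      (rank_matB_chart ..).symm.trans hB⟩, rfl⟩

end Bijection

def castEW {r w₁ w₁' w₁'' w₂ w₂'' w₂' : ℕ} (e₁ : w₁' = w₁'') (e₂ : w₂ = w₂'')
    (p : EW r w₁ w₁'' w₂'' w₂') : EW r w₁ w₁' w₂ w₂' :=
  (p.1.submatrix (Fin.cast e₁) id, p.2.1.submatrix id (Fin.cast e₂),
    fun h => (p.2.2 h).submatrix (Fin.cast e₁) (Fin.cast e₂))

theorem stmt_18 (r w₁ w₁' w₂ w₂' v₁' v₂' : ℕ)
    (hv₁ : v₁' ≤ w₁') (hv₂ : v₂' ≤ w₂) :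
    Set.BijOn
      (fun t : Matrix (Fin (w₁' - v₁')) (Fin v₁') ℂ × Matrix (Fin v₂') (Fin (w₂ - v₂')) ℂ ×
          Matrix (Fin v₁') (Fin w₁) ℂ × Matrix (Fin w₂') (Fin v₂') ℂ ×
          (Fin r → Matrix (Fin v₁') (Fin v₂') ℂ) =>
        match t with
        | (P, Q, Z₁, Z₂, C) =>
          (((vstack Z₁ (P * Z₁)).submatrix
                (Fin.cast (Nat.add_sub_cancel' hv₁).symm) id,
              (hstack Z₂ (Z₂ * Q)).submatrix id
                (Fin.cast (Nat.add_sub_cancel' hv₂).symm),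
              fun h =>
                (vstack (hstack (C h) (C h * Q))
                    (hstack (P * C h) (P * C h * Q))).submatrix
                  (Fin.cast (Nat.add_sub_cancel' hv₁).symm)
                  (Fin.cast (Nat.add_sub_cancel' hv₂).symm)) :
            EW r w₁ w₁' w₂ w₂'))
      {t | (matA t.2.2.1 t.2.2.2.2).rank = v₁' ∧ (matB t.2.2.2.1 t.2.2.2.2).rank = v₂'}
      {p | (matA p.1 p.2.2).rank = v₁' ∧ (matB p.2.1 p.2.2).rank = v₂' ∧
          LinearIndependent ℂ (fun i : Fin v₁' => matA p.1 p.2.2 (Fin.castLE hv₁ i)) ∧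
          LinearIndependent ℂ
            (fun j : Fin v₂' => fun i => matB p.2.1 p.2.2 i (Fin.castLE hv₂ j))} := by
  show Set.BijOn (castEW _ _ ∘ chart) _ _
  -- Once `w₁' = v₁' + d₁` with `d₁` a variable, every `Fin.cast` is the identity.
  generalize (Nat.add_sub_cancel' hv₁).symm = e₁
  generalize (Nat.add_sub_cancel' hv₂).symm = e₂
  generalize w₁' - v₁' = d₁ at e₁ ⊢
  generalize w₂ - v₂' = d₂ at e₂ ⊢
  subst e₁ e₂
  exact bijOn_chart
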